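/- Let G be a finite group, ρ: G → GL(V) a representation on a finite-dimensional complex vector space V, and e_1, …, e_n ∈ G elements whose product e_1⋯e_n lies in the commutator subgroup of G (equivalently, there exist g ≥ 0 and a_1,b_1,…,a_g,b_g ∈ G with a_1b_1a_1^{-1}b_1^{-1}⋯a_gb_ga_g^{-1}b_g^{-1} = e_1⋯e_n). Then the sum ∑_{j=1}^n age(ρ(e_j)) is an integer. -/

import Mathlib

/-!
Every complex number is `z = ‖z‖ · e^{2πi fracArg z}`, where `fracArg z ∈ [0, 1)` is its
contribution to the age, so multiplying over the eigenvalues gives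
`det g = ‖det g‖ · e^{2πi age g}` for every endomorphism `g`. Since `det ∘ ρ` is a character of
`G`, it is trivial on the commutator subgroup, so the determinants of the `ρ(e_j)` multiply
to `1`. Hence so do their phases: `e^{2πi ∑ age ρ(e_j)} = 1`.
-/

open Polynomial

/-- The age of a linear endomorphism of a finite-dimensional complex vector space:
the sum, over the roots of its characteristic polynomial (with multiplicity), of the
unique representative in `[0,1)` of `arg z / (2π)` modulo `1`.  For an automorphism `g`
of finite order `s`, whose eigenvalues are `e^{2π√-1 l_k / s}` with `l_k ∈ {0,…,s-1}`,
this equals `(l_1 + ⋯ + l_N)/s`. -/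
noncomputable def age {V : Type*} [AddCommGroup V] [Module ℂ V] [FiniteDimensional ℂ V]
    (g : V →ₗ[ℂ] V) : ℝ :=
  ((LinearMap.charpoly g).roots.map fun z =>
    if 0 ≤ z.arg then z.arg / (2 * Real.pi) else z.arg / (2 * Real.pi) + 1).sum

open Complex
open scoped Real

noncomputable def fracArg (z : ℂ) : ℝ :=
  if 0 ≤ z.arg then z.arg / (2 * Real.pi) else z.arg / (2 * Real.pi) + 1

lemma exp_two_pi_I_mul_fracArg (z : ℂ) : exp (2 * π * I * fracArg z) = exp (arg z * I) := by
  have h : 2 * π * I * (arg z / (2 * π) : ℝ) = arg z * I := by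
    push_cast
    field_simp [Real.pi_ne_zero]
  unfold fracArg
  split_ifs
  · rw [h]
  · rw [ofReal_add, mul_add, exp_add, h, ofReal_one, mul_one, exp_two_pi_mul_I, mul_one]

lemma norm_mul_exp_two_pi_I_mul_fracArg (z : ℂ) : ‖z‖ * exp (2 * π * I * fracArg z) = z := by
  rw [exp_two_pi_I_mul_fracArg, norm_mul_exp_arg_mul_I]

lemma norm_prod_mul_exp_two_pi_I_mul_sum_fracArg (s : Multiset ℂ) :
    ‖s.prod‖ * exp (2 * π * I * (s.map fracArg).sum) = s.prod := by
  induction s using Multiset.induction_on with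
  | empty => simp
  | cons a s ih =>
    rw [Multiset.prod_cons, Multiset.map_cons, Multiset.sum_cons, norm_mul, ofReal_mul,
      ofReal_add, mul_add, exp_add]
    linear_combination (‖s.prod‖ * exp (2 * π * I * (s.map fracArg).sum)) *
      norm_mul_exp_two_pi_I_mul_fracArg a + a * ih

lemma exists_int_eq_of_exp_two_pi_I_mul_eq_one {x : ℝ} (h : exp (2 * π * I * x) = 1) :
    ∃ k : ℤ, x = k := by
  obtain ⟨k, hk⟩ := exp_eq_one_iff.mp h
  refine ⟨k, ?_⟩
  rw [mul_comm] at hk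
  exact_mod_cast mul_right_cancel₀ two_pi_I_ne_zero hk

section

variable {V : Type*} [AddCommGroup V] [Module ℂ V] [FiniteDimensional ℂ V]

lemma age_eq_sum_fracArg (g : V →ₗ[ℂ] V) :
    age g = (g.charpoly.roots.map fracArg).sum := rfl

lemma norm_det_mul_exp_two_pi_I_mul_age (g : V →ₗ[ℂ] V) :
    ‖LinearMap.det g‖ * exp (2 * π * I * age g) = LinearMap.det g := by
  rw [Module.End.det_eq_prod_roots_charpoly_of_splits (IsAlgClosed.splits _), age_eq_sum_fracArg]
  exact norm_prod_mul_exp_two_pi_I_mul_sum_fracArg _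

lemma exists_int_sum_age_eq_of_prod_det_eq_one {ι : Type*} (s : Finset ι) (g : ι → V →ₗ[ℂ] V)
    (h : ∏ i ∈ s, LinearMap.det (g i) = 1) : ∃ k : ℤ, ∑ i ∈ s, age (g i) = k := by
  apply exists_int_eq_of_exp_two_pi_I_mul_eq_one
  have hnorm : ∏ i ∈ s, (‖LinearMap.det (g i)‖ : ℂ) = 1 := by
    rw [← ofReal_prod, ← norm_prod, h, norm_one, ofReal_one]
  calc exp (2 * π * I * ↑(∑ i ∈ s, age (g i)))
      = ∏ i ∈ s, exp (2 * π * I * age (g i)) := by rw [ofReal_sum, Finset.mul_sum, exp_sum]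
    _ = ∏ i ∈ s, (‖LinearMap.det (g i)‖ * exp (2 * π * I * age (g i))) := by
        rw [Finset.prod_mul_distrib, hnorm, one_mul]
    _ = 1 := by simp only [norm_det_mul_exp_two_pi_I_mul_age, h]

end

lemma MonoidHom.map_eq_one_of_mem_commutator {G M : Type*} [Group G] [CommMonoid M]
    (f : G →* M) {x : G} (hx : x ∈ commutator G) : f x = 1 :=
  congrArg Units.val (Abelianization.commutator_subset_ker f.toHomUnits hx)

theorem sum_age_mem_int_general {V : Type*} [AddCommGroup V] [Module ℂ V] [FiniteDimensional ℂ V]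
    {G : Type*} [Group G] (ρ : Representation ℂ G V)
    (n : ℕ) (e : Fin n → G) (he : (List.ofFn e).prod ∈ commutator G) :
    ∃ k : ℤ, ∑ j, age (ρ (e j)) = (k : ℝ) := by
  let χ : G →* ℂ := LinearMap.det.comp ρ
  apply exists_int_sum_age_eq_of_prod_det_eq_one
  calc ∏ j, χ (e j) = χ (List.ofFn e).prod := by
        rw [map_list_prod, List.map_ofFn, List.prod_ofFn]; rfl
    _ = 1 := χ.map_eq_one_of_mem_commutator he

/-- Let `G` be a finite group, `ρ : G → GL(V)` a representation on a finite-dimensional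
complex vector space, and `e_1, …, e_n ∈ G` elements whose product lies in the commutator
subgroup of `G`. Then `∑_{j=1}^n age(ρ(e_j))` is an integer. -/
theorem sum_age_mem_int {V : Type*} [AddCommGroup V] [Module ℂ V] [FiniteDimensional ℂ V]
    {G : Type*} [Group G] [Finite G] (ρ : Representation ℂ G V)
    (n : ℕ) (e : Fin n → G) (he : (List.ofFn e).prod ∈ commutator G) :
    ∃ k : ℤ, ∑ j, age (ρ (e j)) = (k : ℝ) :=
  sum_age_mem_int_general ρ n e he
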